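/- Let P be a point set of F^m points in [0,1)^s. If P is strongly (m_1,...,m_s)-equidistributed in base φ, then P is strongly (n_1,...,n_s)-equidistributed in base φ for all integer tuples with 0 ≤ n_j ≤ m_j for each j. -/

import Mathlib

open Finset

/-- `F m` denotes `F^m := F_{m+2}`, the Fibonacci numbers with shifted index,
so `F^{-2} = 0`, `F^{-1} = 1`, `F^0 = 1`, `F^1 = 2`, … (and `F^m = 0` for `m < -2`). -/
def F (m : ℤ) : ℕ := Nat.fib (m + 2).toNat

lemma F_pos (m : ℤ) (h : -2 < m) : 0 < F m := Nat.fib_pos.mpr (by omega)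

/-- The set of indices of the `1` digits in the (unique) Zeckendorf representation
`n = ∑_{j ∈ zeckSet n} F^j` (no two consecutive indices), computed greedily. -/
def zeckSet : ℕ → Finset ℕ
  | 0 => ∅
  | (n + 1) =>
      insert (Nat.findGreatest (fun i => F i ≤ n + 1) (n + 1))
        (zeckSet (n + 1 - F (Nat.findGreatest (fun i => F i ≤ n + 1) (n + 1))))
decreasing_by exact Nat.sub_lt (Nat.succ_pos n) (F_pos _ (by omega))

/-- The golden ratio `φ = (1 + √5)/2`. -/
noncomputable def phi : ℝ := (1 + Real.sqrt 5) / 2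

/-- `|n|`, the zeroth Zeckendorf digit of `n`. -/
def zd0 (n : ℕ) : ℕ := if 0 ∈ zeckSet n then 1 else 0

/-- `n‾ = ∑_j d_j φ^j`, the `n`-th whole number in base `φ`. -/
noncomputable def zbar (n : ℕ) : ℝ := ∑ j ∈ zeckSet n, phi ^ j

/-- `n ⊙ φ^k = ∑_j d_j F^{j+k}`, the Zeckendorf digit shift. -/
def zshift (n : ℕ) (k : ℤ) : ℕ := ∑ j ∈ zeckSet n, F (j + k)

/-- A point set `P` of `F^m` points in `[0,1)^s` is *strongly (m₁,…,m_s)-equidistributed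
in base φ* if every interval `I = Π_j [a_j‾/φ^{m_j}, (a_j+1)‾/φ^{m_j})` of the
`(m₁,…,m_s)`-partition contains exactly `F^(m−|I|)` points of `P`, where
`|I| = ∑_j (m_j + |a_j|)`. -/
def StronglyEquidistributed (s m : ℕ) (P : Fin (F m) → Fin s → ℝ) (mv : Fin s → ℕ) :
    Prop :=
  ∀ a : Fin s → ℕ, (∀ j, a j < F (mv j)) →
    Nat.card {i : Fin (F m) //
        ∀ j, P i j ∈ Set.Ico (zbar (a j) / phi ^ (mv j)) (zbar (a j + 1) / phi ^ (mv j))} =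
      F ((m : ℤ) - ∑ j, ((mv j : ℤ) + (zd0 (a j) : ℤ)))

/-!
Lowering one level `m_j = l + 1` to `l` suffices. The digit shift `a ↦ a ⊙ φ` maps the level-`l`
breakpoints `a‾/φ^l` onto the level-`(l+1)` breakpoints whose index has last digit `0`, and
consecutive such indices differ by `1` if `|a| = 1` and by `2` if `|a| = 0`. So a level-`l` cell is
either a single level-`(l+1)` cell of the same order `|I|`, or the union of two cells of orders
`|I| + 1` and `|I| + 2`, whose counts `F^(t-1) + F^(t-2)` add up to `F^t` for `t = m - |I| ≠ -1`.
The case `t = -1` cannot occur: the `F^m` points fill the cells, so `∑_I F^(m-|I|) = F^m`, while the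
convolution `F^l F^t + F^(l-1) F^(t-1) ≤ F^(t+l+1)` bounds this sum by `F^m`, strictly as soon as a
cell of order `m + 2` has last digit `0` in a nonzero level.
-/

open Function

lemma F_eq_zero {k : ℤ} (hk : k ≤ -2) : F k = 0 := by
  simp [F, show (k + 2).toNat = 0 by omega]

lemma F_mono {i j : ℤ} (h : i ≤ j) : F i ≤ F j := Nat.fib_mono (by omega)

lemma F_add_one (k : ℤ) (hk : -1 ≤ k) : F (k + 1) = F k + F (k - 1) := by
  simp only [F, show (k + 1 + 2).toNat = (k - 1 + 2).toNat + 2 by omega,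
    show (k + 2).toNat = (k - 1 + 2).toNat + 1 by omega, Nat.fib_add_two, add_comm]

lemma F_sub_one_add_F_sub_two {t : ℤ} (ht : t ≠ -1) : F (t - 1) + F (t - 2) = F t := by
  rcases lt_or_gt_of_ne ht with ht | ht
  · simp [F_eq_zero (show t ≤ -2 by omega), F_eq_zero (show t - 1 ≤ -2 by omega),
      F_eq_zero (show t - 2 ≤ -2 by omega)]
  · have := F_add_one (t - 1) (by omega)
    rw [sub_add_cancel, sub_sub, one_add_one_eq_two] at this
    exact this.symm

lemma lt_F (n : ℕ) : n < F n := by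
  have := Nat.le_fib_add_one (n + 2)
  simp only [F, show ((n : ℤ) + 2).toNat = n + 2 by omega]
  omega

lemma F_mul_add_F_mul (l : ℕ) {t : ℤ} (ht : -1 ≤ t) :
    F l * F t + F (l - 1) * F (t - 1) = F (t + l + 1) := by
  obtain ⟨u, rfl⟩ : ∃ u : ℕ, t = u - 1 := ⟨(t + 1).toNat, by omega⟩
  have key := Nat.fib_add u (l + 1)
  simp only [F, show ((l : ℤ) + 2).toNat = l + 2 by omega,
    show ((u : ℤ) - 1 + 2).toNat = u + 1 by omega, show ((l : ℤ) - 1 + 2).toNat = l + 1 by omega,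
    show ((u : ℤ) - 1 - 1 + 2).toNat = u by omega,
    show ((u : ℤ) - 1 + l + 1 + 2).toNat = u + (l + 1) + 1 by omega, key]
  ring

lemma F_mul_add_F_mul_le (l : ℕ) (t : ℤ) :
    F l * F t + F (l - 1) * F (t - 1) ≤ F (t + l + 1) := by
  rcases le_or_gt (-1) t with ht | ht
  · exact (F_mul_add_F_mul l ht).le
  · simp [F_eq_zero (show t ≤ -2 by omega), F_eq_zero (show t - 1 ≤ -2 by omega)]

/-- The weights used are `j ↦ F^(j+c)`, whose sums over `zeckSet n` are `n` (for `c = 0`) and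
`n ⊙ φ` (for `c = 1`), and `j ↦ φ^j`, whose sum is `n‾`. -/
structure IsFibWeight {R : Type*} [AddCommMonoid R] [PartialOrder R] (w : ℕ → R) : Prop where
  pos_zero : 0 < w 0
  zero_lt_one : w 0 < w 1
  add_two : ∀ k, w (k + 2) = w (k + 1) + w k

def NoConsecutive (S : Finset ℕ) : Prop := ∀ j ∈ S, j + 1 ∉ S

lemma NoConsecutive.mono {S T : Finset ℕ} (hT : NoConsecutive T) (h : S ⊆ T) :
    NoConsecutive S := fun j hj hj1 => hT j (h hj) (h hj1)

namespace IsFibWeight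

variable {R : Type*} [AddCommMonoid R] [LinearOrder R] [IsOrderedCancelAddMonoid R]
  {w : ℕ → R} (hw : IsFibWeight w)
include hw

lemma pos_and_lt_succ (k : ℕ) : 0 < w k ∧ w k < w (k + 1) := by
  induction k with
  | zero => exact ⟨hw.pos_zero, hw.zero_lt_one⟩
  | succ k ih =>
    refine ⟨ih.1.trans ih.2, ?_⟩
    rw [hw.add_two]
    exact lt_add_of_pos_right _ ih.1

lemma pos (k : ℕ) : 0 < w k := (hw.pos_and_lt_succ k).1

lemma strictMono : StrictMono w := strictMono_nat_of_lt_succ fun k => (hw.pos_and_lt_succ k).2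

lemma sum_lt {S : Finset ℕ} (hS : NoConsecutive S) {k : ℕ} (hk : ∀ j ∈ S, j < k) :
    ∑ j ∈ S, w j < w k := by
  induction k using Nat.twoStepInduction generalizing S with
  | zero => simp [Finset.eq_empty_of_forall_notMem fun j hj => Nat.not_lt_zero _ (hk j hj),
      hw.pos_zero]
  | one =>
    calc ∑ j ∈ S, w j ≤ ∑ j ∈ {0}, w j :=
          Finset.sum_le_sum_of_subset_of_nonneg (fun j hj => by simpa using hk j hj)
            fun j _ _ => (hw.pos j).le
      _ < w 1 := by simpa using hw.zero_lt_one
  | more k ih₀ ih₁ =>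
    by_cases hk1 : k + 1 ∈ S
    · have hrest : ∀ j ∈ S.erase (k + 1), j < k := fun j hj => by
        have := hk j (Finset.mem_of_mem_erase hj)
        have := Finset.ne_of_mem_erase hj
        have : j ≠ k := fun hjk => hS j (Finset.mem_of_mem_erase hj) (hjk ▸ hk1)
        omega
      rw [← Finset.add_sum_erase S w hk1, hw.add_two]
      exact add_lt_add_right (ih₀ (hS.mono (Finset.erase_subset _ _)) hrest) _
    · have hlt : ∀ j ∈ S, j < k + 1 := fun j hj => by
        have := hk j hj
        have : j ≠ k + 1 := fun hjk => hk1 (hjk ▸ hj)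
        omega
      exact (ih₁ hS hlt).trans (hw.strictMono (Nat.lt_succ_self _))

lemma sum_lt_sum_of_toColex_lt {S T : Finset ℕ} (hS : NoConsecutive S)
    (h : toColex S < toColex T) : ∑ j ∈ S, w j < ∑ j ∈ T, w j := by
  obtain ⟨a, haT, haS, hlt⟩ := Finset.Colex.toColex_lt_toColex_iff_exists_forall_lt.1 h
  have hdiff : ∑ j ∈ S \ T, w j < w a :=
    hw.sum_lt (hS.mono Finset.sdiff_subset) fun b hb => hlt b (Finset.mem_sdiff.1 hb).1
      (Finset.mem_sdiff.1 hb).2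
  have hsub : insert a (S ∩ T) ⊆ T := Finset.insert_subset haT Finset.inter_subset_right
  calc ∑ j ∈ S, w j = ∑ j ∈ S ∩ T, w j + ∑ j ∈ S \ T, w j :=
        (Finset.sum_inter_add_sum_sdiff _ _ _).symm
    _ < ∑ j ∈ S ∩ T, w j + w a := add_lt_add_right hdiff _
    _ = ∑ j ∈ insert a (S ∩ T), w j := by
        rw [Finset.sum_insert fun ha => haS (Finset.mem_inter.1 ha).1, add_comm]
    _ ≤ ∑ j ∈ T, w j :=
        Finset.sum_le_sum_of_subset_of_nonneg hsub fun j _ _ => (hw.pos j).le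

end IsFibWeight

lemma isFibWeight_F_add (c : ℤ) (hc : 0 ≤ c) : IsFibWeight fun j : ℕ => F (j + c) where
  pos_zero := F_pos _ (by omega)
  zero_lt_one := by
    simp only [F, Nat.cast_zero, Nat.cast_one, zero_add,
      show (1 + c + 2).toNat = (c + 2).toNat + 1 by omega]
    exact Nat.fib_lt_fib_succ (by omega)
  add_two k := by
    have := F_add_one (k + c + 1) (by omega)
    push_cast
    convert this using 2 <;> ring_nf

lemma isFibWeight_phi_pow : IsFibWeight (phi ^ ·) where
  pos_zero := by simp
  zero_lt_one := by
    simp only [pow_zero, pow_one]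
    exact Real.one_lt_goldenRatio
  add_two k := by
    have : phi ^ 2 = phi + 1 := Real.goldenRatio_sq
    rw [pow_add, this]; ring

lemma isFibWeight_F : IsFibWeight fun j : ℕ => F j := by
  simpa using isFibWeight_F_add 0 le_rfl

lemma zeckSet_zero : zeckSet 0 = ∅ := by rw [zeckSet]

lemma noConsecutive_zeckSet_and_sum (n : ℕ) :
    NoConsecutive (zeckSet n) ∧ ∑ j ∈ zeckSet n, F j = n := by
  induction n using Nat.strong_induction_on with
  | _ n ih =>
    rcases n with _ | n
    · simp [zeckSet_zero, NoConsecutive]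
    set g := Nat.findGreatest (fun i => F i ≤ n + 1) (n + 1)
    have hFg : F g ≤ n + 1 := Nat.findGreatest_spec (P := fun i : ℕ => F i ≤ n + 1)
      (Nat.zero_le _) (by simp [F])
    have hgn : g < n + 1 := (lt_F g).trans_le hFg
    have hFg1 : n + 1 < F (g + 1) := by
      have := Nat.findGreatest_is_greatest (P := fun i : ℕ => F i ≤ n + 1) (n := n + 1)
        (k := g + 1) (by omega) (by omega)
      push_cast at this; omega
    set r := n + 1 - F g
    have hr : r < F (g - 1) := by have := F_add_one g (by omega); omega
    obtain ⟨ihS, ihsum⟩ := ih r (by have := F_pos g (by omega); omega)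
    have hsmall : ∀ j ∈ zeckSet r, j + 1 < g := fun j hj => by
      have := Finset.single_le_sum (f := fun j : ℕ => F j) (fun _ _ => Nat.zero_le _) hj
      by_contra! h
      have := F_mono (show (g : ℤ) - 1 ≤ j by omega)
      omega
    have hset : zeckSet (n + 1) = insert g (zeckSet r) := by rw [zeckSet]
    have hg_notMem : g ∉ zeckSet r := fun h => by have := hsmall g h; omega
    rw [hset]
    refine ⟨fun j hj hj1 => ?_, by rw [Finset.sum_insert hg_notMem, ihsum]; omega⟩
    rcases Finset.mem_insert.1 hj with rfl | hj <;> rcases Finset.mem_insert.1 hj1 with h | h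
    · omega
    · have := hsmall _ h; omega
    · have := hsmall _ hj; omega
    · exact ihS j hj h

lemma noConsecutive_zeckSet (n : ℕ) : NoConsecutive (zeckSet n) :=
  (noConsecutive_zeckSet_and_sum n).1

lemma sum_zeckSet (n : ℕ) : ∑ j ∈ zeckSet n, F j = n := (noConsecutive_zeckSet_and_sum n).2

lemma toColex_zeckSet_lt_iff {n n' : ℕ} :
    toColex (zeckSet n) < toColex (zeckSet n') ↔ n < n' := by
  have hsum : ∀ {n n'}, toColex (zeckSet n) < toColex (zeckSet n') → n < n' := fun h => by
    simpa [sum_zeckSet] using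
      isFibWeight_F.sum_lt_sum_of_toColex_lt (noConsecutive_zeckSet _) h
  refine ⟨hsum, fun h => ?_⟩
  rcases lt_trichotomy (toColex (zeckSet n)) (toColex (zeckSet n')) with h' | h' | h'
  · exact h'
  · have := sum_zeckSet n
    rw [toColex_inj.1 h', sum_zeckSet] at this
    omega
  · exact absurd (hsum h') (by omega)

lemma IsFibWeight.sum_zeckSet_strictMono {R : Type*} [AddCommMonoid R] [LinearOrder R]
    [IsOrderedCancelAddMonoid R] {w : ℕ → R} (hw : IsFibWeight w) :
    StrictMono fun n => ∑ j ∈ zeckSet n, w j := fun _ _ h =>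
  hw.sum_lt_sum_of_toColex_lt (noConsecutive_zeckSet _) (toColex_zeckSet_lt_iff.2 h)

lemma zeckSet_eq_of_sum_eq {S : Finset ℕ} (hS : NoConsecutive S) {n : ℕ}
    (hsum : ∑ j ∈ S, F j = n) : zeckSet n = S := by
  rcases lt_trichotomy (toColex (zeckSet n)) (toColex S) with h | h | h
  · have := isFibWeight_F.sum_lt_sum_of_toColex_lt (noConsecutive_zeckSet n) h
    simp only [sum_zeckSet] at this
    omega
  · exact toColex_inj.1 h
  · have := isFibWeight_F.sum_lt_sum_of_toColex_lt hS h
    simp only [sum_zeckSet] at this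
    omega

lemma zeckSet_F (l : ℕ) : zeckSet (F l) = {l} :=
  zeckSet_eq_of_sum_eq (by simp [NoConsecutive]) (by simp)

lemma zeckSet_zshift (a : ℕ) : zeckSet (zshift a 1) = (zeckSet a).image (· + 1) := by
  refine zeckSet_eq_of_sum_eq (fun j hj hj1 => ?_) ?_
  · simp only [Finset.mem_image] at hj hj1
    obtain ⟨i, hi, rfl⟩ := hj
    obtain ⟨i', hi', hii'⟩ := hj1
    exact noConsecutive_zeckSet a i hi (by rwa [show i + 1 = i' by omega])
  · rw [Finset.sum_image fun _ _ _ _ h => Nat.add_right_cancel h]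
    simp [zshift]

lemma zshift_strictMono : StrictMono (zshift · 1) :=
  (isFibWeight_F_add 1 zero_le_one).sum_zeckSet_strictMono

lemma zshift_F (l : ℕ) : zshift (F l) 1 = F (l + 1) := by simp [zshift, zeckSet_F]

lemma zero_notMem_zeckSet_zshift (a : ℕ) : 0 ∉ zeckSet (zshift a 1) := by
  simp [zeckSet_zshift]

lemma one_mem_zeckSet_zshift_iff (a : ℕ) : 1 ∈ zeckSet (zshift a 1) ↔ 0 ∈ zeckSet a := by
  simp [zeckSet_zshift]

lemma exists_zshift_eq {c : ℕ} (hc : 0 ∉ zeckSet c) : ∃ a, zshift a 1 = c := by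
  have hpos : ∀ j ∈ zeckSet c, 1 ≤ j := fun j hj =>
    Nat.one_le_iff_ne_zero.2 fun h => hc (h ▸ hj)
  have hinj : Set.InjOn (· - 1) (zeckSet c : Set ℕ) := fun x hx y hy h => by
    have := hpos x hx; have := hpos y hy; simp only at h; omega
  set S := (zeckSet c).image (· - 1)
  have hS : NoConsecutive S := fun j hj hj1 => by
    simp only [S, Finset.mem_image] at hj hj1
    obtain ⟨i, hi, rfl⟩ := hj
    obtain ⟨i', hi', hii'⟩ := hj1
    have := hpos i hi; have := hpos i' hi'
    exact noConsecutive_zeckSet c i hi (by rwa [show i + 1 = i' by omega])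
  refine ⟨∑ j ∈ S, F j, ?_⟩
  rw [zshift, zeckSet_eq_of_sum_eq hS rfl, Finset.sum_image hinj]
  conv_rhs => rw [← sum_zeckSet c]
  refine Finset.sum_congr rfl fun j hj => ?_
  have := hpos j hj
  congr 1
  omega

lemma zero_one_notMem_zeckSet_of_zero_mem_succ {n : ℕ} (h : 0 ∈ zeckSet (n + 1)) :
    0 ∉ zeckSet n ∧ 1 ∉ zeckSet n := by
  have hn : zeckSet n = (zeckSet (n + 1)).erase 0 := by
    refine zeckSet_eq_of_sum_eq ((noConsecutive_zeckSet _).mono (Finset.erase_subset _ _)) ?_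
    have := Finset.add_sum_erase _ (fun j : ℕ => F j) h
    have hF0 : F 0 = 1 := rfl
    simp only [sum_zeckSet, Nat.cast_zero, hF0] at this
    omega
  rw [hn]
  exact ⟨Finset.notMem_erase _ _, fun h1 =>
    noConsecutive_zeckSet (n + 1) 0 h (Finset.mem_of_mem_erase h1)⟩

lemma zeckSet_succ {n : ℕ} (h0 : 0 ∉ zeckSet n) (h1 : 1 ∉ zeckSet n) :
    zeckSet (n + 1) = insert 0 (zeckSet n) := by
  refine zeckSet_eq_of_sum_eq (fun j hj hj1 => ?_) ?_
  · rcases Finset.mem_insert.1 hj with rfl | hj <;> rcases Finset.mem_insert.1 hj1 with h | h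
    · omega
    · exact h1 h
    · omega
    · exact noConsecutive_zeckSet n j hj h
  · rw [Finset.sum_insert h0, sum_zeckSet]
    simp [F, add_comm]

lemma zshift_succ_eq {a c : ℕ} (hac : zshift a 1 < c) (hc : 0 ∉ zeckSet c)
    (hbetween : ∀ c', zshift a 1 < c' → c' < c → 0 ∈ zeckSet c') :
    zshift (a + 1) 1 = c := by
  obtain ⟨a', rfl⟩ := exists_zshift_eq hc
  have hle : zshift (a + 1) 1 ≤ zshift a' 1 :=
    zshift_strictMono.monotone (Nat.succ_le_of_lt (zshift_strictMono.lt_iff_lt.1 hac))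
  refine hle.antisymm (not_lt.1 fun hlt => ?_)
  exact zero_notMem_zeckSet_zshift _ (hbetween _ (zshift_strictMono (Nat.lt_succ_self a)) hlt)

lemma zshift_succ_of_zero_mem {a : ℕ} (h : 0 ∈ zeckSet a) :
    zshift (a + 1) 1 = zshift a 1 + 1 :=
  zshift_succ_eq (Nat.lt_succ_self _)
    (fun h0 => (zero_one_notMem_zeckSet_of_zero_mem_succ h0).2 ((one_mem_zeckSet_zshift_iff a).2 h))
    fun _ h₁ h₂ => absurd h₂ (by omega)

lemma zero_mem_zeckSet_zshift_add_one {a : ℕ} (h : 0 ∉ zeckSet a) :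
    0 ∈ zeckSet (zshift a 1 + 1) := by
  rw [zeckSet_succ (zero_notMem_zeckSet_zshift a) (mt (one_mem_zeckSet_zshift_iff a).1 h)]
  exact Finset.mem_insert_self _ _

lemma zshift_succ_of_zero_notMem {a : ℕ} (h : 0 ∉ zeckSet a) :
    zshift (a + 1) 1 = zshift a 1 + 2 :=
  zshift_succ_eq (by omega)
    (fun h0 => (zero_one_notMem_zeckSet_of_zero_mem_succ h0).1 (zero_mem_zeckSet_zshift_add_one h))
    fun c' h₁ h₂ => by
      obtain rfl : c' = zshift a 1 + 1 := by omega
      exact zero_mem_zeckSet_zshift_add_one h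

lemma zbar_strictMono : StrictMono zbar := isFibWeight_phi_pow.sum_zeckSet_strictMono

lemma zbar_zero : zbar 0 = 0 := by simp [zbar, zeckSet_zero]

lemma zbar_F (l : ℕ) : zbar (F l) = phi ^ l := by simp [zbar, zeckSet_F]

lemma zbar_zshift (a : ℕ) : zbar (zshift a 1) = phi * zbar a := by
  rw [zbar, zeckSet_zshift, Finset.sum_image fun _ _ _ _ h => Nat.add_right_cancel h, zbar,
    Finset.mul_sum]
  exact Finset.sum_congr rfl fun j _ => pow_succ' phi j

lemma image_zshift_range (l : ℕ) :
    (Finset.range (F l)).image (zshift · 1) =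
      (Finset.range (F (l + 1))).filter (fun c => 0 ∉ zeckSet c) := by
  ext c
  simp only [Finset.mem_image, Finset.mem_range, Finset.mem_filter, ← zshift_F l]
  constructor
  · rintro ⟨a, ha, rfl⟩
    exact ⟨zshift_strictMono ha, zero_notMem_zeckSet_zshift a⟩
  · rintro ⟨hc, h0⟩
    obtain ⟨a, rfl⟩ := exists_zshift_eq h0
    exact ⟨a, zshift_strictMono.lt_iff_lt.1 hc, rfl⟩

lemma sum_range_F_sub_zd0 (l : ℕ) (Y : ℤ) :
    ∑ c ∈ Finset.range (F (l + 1)), F (Y - zd0 c) = F l * F Y + F (l - 1) * F (Y - 1) := by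
  have hzero : ((Finset.range (F (l + 1))).filter (fun c => 0 ∉ zeckSet c)).card = F l := by
    rw [← image_zshift_range, Finset.card_image_of_injective _ zshift_strictMono.injective,
      Finset.card_range]
  have hone : ((Finset.range (F (l + 1))).filter (fun c => 0 ∈ zeckSet c)).card = F (l - 1) := by
    have := Finset.card_filter_add_card_filter_not
      (s := Finset.range (F (l + 1))) (p := fun c => 0 ∈ zeckSet c)
    rw [hzero, Finset.card_range] at this
    have := F_add_one l (by omega)
    omega
  simp only [zd0, apply_ite (fun d : ℕ => F (Y - d)), Nat.cast_one, Nat.cast_zero, sub_zero,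
    Finset.sum_ite, Finset.sum_const, smul_eq_mul, hzero, hone]
  ring

lemma sum_F_sub_le (n : ℕ) (Y : ℤ) : ∑ c : Fin (F n), F (Y - (n + zd0 c)) ≤ F Y := by
  rcases n with _ | l
  · show ∑ c : Fin 1, _ ≤ _
    simp [zd0, zeckSet_zero]
  · rw [Fin.sum_univ_eq_sum_range (fun c => F (Y - ((l + 1 : ℕ) + zd0 c)))]
    push_cast
    simp only [← sub_sub, sum_range_F_sub_zd0]
    have := F_mul_add_F_mul_le l (Y - l - 1)
    rwa [show Y - l - 1 + l + 1 = Y by ring] at this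

lemma phi_pos : 0 < phi := Real.goldenRatio_pos

def cell (n c : ℕ) : Set ℝ := Set.Ico (zbar c / phi ^ n) (zbar (c + 1) / phi ^ n)

lemma pairwise_disjoint_cell (n : ℕ) : Pairwise (onFun Disjoint (cell n)) := by
  refine (pairwise_disjoint_on _).2 fun c c' h => Set.Ico_disjoint_Ico.2 ?_
  have := zbar_strictMono.monotone (Nat.succ_le_of_lt h)
  have := div_le_div_of_nonneg_right this (pow_pos phi_pos n).le
  simp only [min_le_iff, le_max_iff]
  tauto

lemma eq_of_mem_cell {n c c' : ℕ} {x : ℝ} (h : x ∈ cell n c) (h' : x ∈ cell n c') :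
    c = c' :=
  by_contra fun hne => Set.disjoint_left.1 (pairwise_disjoint_cell n hne) h h'

lemma exists_mem_cell (n : ℕ) {x : ℝ} (hx : x ∈ Set.Ico (0 : ℝ) 1) :
    ∃ c < F n, x ∈ cell n c := by
  have hpow : 0 < phi ^ n := pow_pos phi_pos n
  set c := Nat.findGreatest (fun c => zbar c ≤ x * phi ^ n) (F n)
  have hc : zbar c ≤ x * phi ^ n :=
    Nat.findGreatest_spec (P := fun c => zbar c ≤ x * phi ^ n) (Nat.zero_le _)
      (by rw [zbar_zero]; exact mul_nonneg hx.1 hpow.le)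
  have hlt : c < F n := (Nat.findGreatest_le (F n)).lt_of_ne fun h => by
    have : zbar (F n) ≤ x * phi ^ n := h ▸ hc
    rw [zbar_F] at this
    nlinarith [hx.2]
  have hc1 : x * phi ^ n < zbar (c + 1) := not_le.1 <|
    Nat.findGreatest_is_greatest (P := fun c => zbar c ≤ x * phi ^ n) (Nat.lt_succ_self c) hlt
  exact ⟨c, hlt, (div_le_iff₀ hpow).2 hc, (lt_div_iff₀ hpow).2 hc1⟩

lemma cell_eq_Ico_zshift (n a : ℕ) :
    cell n a =
      Set.Ico (zbar (zshift a 1) / phi ^ (n + 1)) (zbar (zshift (a + 1) 1) / phi ^ (n + 1)) := by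
  have h : ∀ z, phi * z / phi ^ (n + 1) = z / phi ^ n := fun z => by
    rw [pow_succ', mul_div_mul_left _ _ phi_pos.ne']
  rw [zbar_zshift, zbar_zshift, h, h, cell]

lemma cell_eq_cell_zshift {a : ℕ} (h : 0 ∈ zeckSet a) (n : ℕ) :
    cell n a = cell (n + 1) (zshift a 1) := by
  rw [cell_eq_Ico_zshift, zshift_succ_of_zero_mem h, cell]

lemma cell_eq_union {a : ℕ} (h : 0 ∉ zeckSet a) (n : ℕ) :
    cell n a = cell (n + 1) (zshift a 1) ∪ cell (n + 1) (zshift a 1 + 1) := by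
  have hmono : ∀ k, zbar k / phi ^ (n + 1) ≤ zbar (k + 1) / phi ^ (n + 1) := fun k =>
    div_le_div_of_nonneg_right (zbar_strictMono.monotone (Nat.le_succ k)) (pow_pos phi_pos _).le
  rw [cell_eq_Ico_zshift, zshift_succ_of_zero_notMem h, cell, cell,
    Set.Ico_union_Ico_eq_Ico (hmono _) (hmono _)]

lemma forall_mem_update_iff {ι β : Type*} [DecidableEq ι] (x : ι → β) (B : ι → Set β) (j₀ : ι)
    (S : Set β) : (∀ j, x j ∈ update B j₀ S j) ↔ x j₀ ∈ S ∧ ∀ j ≠ j₀, x j ∈ B j :=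
  forall_update_iff B fun j S => x j ∈ S

lemma card_update_union {α ι β : Type*} [Finite α] [DecidableEq ι] (P : α → ι → β)
    (B : ι → Set β) (j₀ : ι) {U V : Set β} (hUV : Disjoint U V) :
    Nat.card {i // ∀ j, P i j ∈ update B j₀ (U ∪ V) j} =
      Nat.card {i // ∀ j, P i j ∈ update B j₀ U j} +
        Nat.card {i // ∀ j, P i j ∈ update B j₀ V j} := by
  have hunion : {i | ∀ j, P i j ∈ update B j₀ (U ∪ V) j} =
      {i | ∀ j, P i j ∈ update B j₀ U j} ∪ {i | ∀ j, P i j ∈ update B j₀ V j} := by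
    ext i
    show (∀ j, _) ↔ (∀ j, _) ∨ (∀ j, _)
    simp only [forall_mem_update_iff, Set.mem_union]
    tauto
  have hdisj : Disjoint {i | ∀ j, P i j ∈ update B j₀ U j}
      {i | ∀ j, P i j ∈ update B j₀ V j} :=
    Set.disjoint_left.2 fun i hU hV =>
      Set.disjoint_left.1 hUV ((forall_mem_update_iff _ _ _ _).1 hU).1
        ((forall_mem_update_iff _ _ _ _).1 hV).1
  have := Set.ncard_union_eq hdisj
  rw [← hunion] at this
  exact this

def partitionWeight {s : ℕ} (X : ℤ) (n : Fin s → ℕ) : ℕ :=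
  ∑ a : (j : Fin s) → Fin (F (n j)), F (X - ∑ j, ((n j : ℤ) + zd0 (a j)))

lemma partitionWeight_eq_sum_succAbove {s : ℕ} (X : ℤ) (n : Fin (s + 1) → ℕ)
    (i : Fin (s + 1)) :
    partitionWeight X n = ∑ a : (j : Fin s) → Fin (F (n (i.succAbove j))), ∑ c : Fin (F (n i)),
      F (X - ∑ j, ((n (i.succAbove j) : ℤ) + zd0 (a j)) - (n i + zd0 c)) := by
  rw [partitionWeight, ← (Fin.insertNthEquiv _ i).sum_comp, Fintype.sum_prod_type_right]
  refine Fintype.sum_congr _ _ fun a => Fintype.sum_congr _ _ fun c => ?_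
  simp only [Fin.insertNthEquiv_apply, Fin.sum_univ_succAbove _ i, Fin.insertNth_apply_same,
    Fin.insertNth_apply_succAbove]
  ring_nf

lemma partitionWeight_le {s : ℕ} (X : ℤ) (n : Fin s → ℕ) : partitionWeight X n ≤ F X := by
  induction s with
  | zero => simp [partitionWeight]
  | succ s ih =>
    rw [partitionWeight_eq_sum_succAbove X n 0]
    exact (Finset.sum_le_sum fun a _ => sum_F_sub_le _ _).trans (ih _)

lemma partitionWeight_lt {s : ℕ} {X : ℤ} {n : Fin s → ℕ} (a : (j : Fin s) → Fin (F (n j)))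
    {j₀ : Fin s} (hn : n j₀ ≠ 0) (ha : zd0 (a j₀) = 0)
    (hX : X - ∑ j, ((n j : ℤ) + zd0 (a j)) = -2) : partitionWeight X n < F X := by
  cases s with
  | zero => exact j₀.elim0
  | succ s =>
    rw [Fin.sum_univ_succAbove _ j₀, ha] at hX
    rw [partitionWeight_eq_sum_succAbove X n j₀]
    refine (Finset.sum_lt_sum (fun a _ => sum_F_sub_le _ _) ⟨fun j => a (j₀.succAbove j),
      Finset.mem_univ _, ?_⟩).trans_le (partitionWeight_le X _)
    have hzero : ∀ c : Fin (F (n j₀)),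
        F (X - ∑ j, ((n (j₀.succAbove j) : ℤ) + zd0 (a (j₀.succAbove j))) - (n j₀ + zd0 c)) = 0 :=
      fun c => F_eq_zero (by push_cast at hX; omega)
    simp only [hzero, Finset.sum_const_zero]
    exact F_pos _ (by push_cast at hX; omega)

lemma sum_update_update {s : ℕ} (n a : Fin s → ℕ) (j₀ : Fin s) (k c : ℕ) :
    ∑ j, ((update n j₀ k j : ℤ) + zd0 (update a j₀ c j)) + (n j₀ + zd0 (a j₀)) =
      ∑ j, ((n j : ℤ) + zd0 (a j)) + (k + zd0 c) := by
  rw [Fintype.sum_eq_add_sum_compl j₀,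
    Fintype.sum_eq_add_sum_compl j₀ fun j => (n j : ℤ) + zd0 (a j)]
  have hrest : ∀ j ∈ ({j₀}ᶜ : Finset (Fin s)),
      (update n j₀ k j : ℤ) + zd0 (update a j₀ c j) = n j + zd0 (a j) :=
    fun j hj => by simp [update_of_ne (Finset.mem_compl.1 hj |> Finset.notMem_singleton.1)]
  rw [Finset.sum_congr rfl hrest]
  simp only [update_self]
  ring

lemma cell_update {s : ℕ} (n a : Fin s → ℕ) (j₀ : Fin s) (k c : ℕ) :
    (fun j => cell (update n j₀ k j) (update a j₀ c j)) =
      update (fun j => cell (n j) (a j)) j₀ (cell k c) := by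
  funext j
  by_cases h : j = j₀
  · subst h; simp
  · simp [update_of_ne h]

namespace StronglyEquidistributed

variable {s m : ℕ} {P : Fin (F m) → Fin s → ℝ}

theorem card_update_cell {n : Fin s → ℕ} (h : StronglyEquidistributed s m P n) {a : Fin s → ℕ}
    {j₀ : Fin s} {c : ℕ} (ha : ∀ j, update a j₀ c j < F (n j)) :
    Nat.card {i // ∀ j, P i j ∈ update (fun j => cell (n j) (a j)) j₀ (cell (n j₀) c) j} =
      F (m - ∑ j, ((n j : ℤ) + zd0 (update a j₀ c j))) := by
  rw [← cell_update, update_eq_self]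
  exact h _ ha

variable (hP : ∀ i j, P i j ∈ Set.Ico (0 : ℝ) 1)
include hP

theorem partitionWeight_eq {n : Fin s → ℕ} (h : StronglyEquidistributed s m P n) :
    partitionWeight m n = F m := by
  classical
  choose idx hidx using fun i j => exists_mem_cell (n j) (hP i j)
  let f : Fin (F m) → (j : Fin s) → Fin (F (n j)) := fun i j => ⟨idx i j, (hidx i j).1⟩
  have hcount : ∀ a : (j : Fin s) → Fin (F (n j)),
      Nat.card {i // ∀ j, P i j ∈ cell (n j) (a j)} = #{i | f i = a} := fun a => by
    rw [Nat.card_eq_fintype_card, Fintype.card_subtype]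
    congr 1
    ext i
    simp only [Finset.mem_filter, Finset.mem_univ, true_and, funext_iff, Fin.ext_iff, f]
    exact forall_congr' fun j =>
      ⟨fun hi => eq_of_mem_cell (hidx i j).2 hi, fun e => e ▸ (hidx i j).2⟩
  calc partitionWeight m n = ∑ a, #{i | f i = a} :=
        Fintype.sum_congr _ _ fun a => (h (fun j => a j) fun j => (a j).2).symm.trans (hcount a)
    _ = F m := by
        rw [← card_eq_sum_card_fiberwise fun i _ => mem_univ (f i), card_univ, Fintype.card_fin]

theorem exponent_ne_neg_two {n : Fin s → ℕ} (h : StronglyEquidistributed s m P n)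
    {a : Fin s → ℕ} (ha : ∀ j, a j < F (n j)) {j₀ : Fin s} (hn : n j₀ ≠ 0)
    (ha₀ : zd0 (a j₀) = 0) : (m : ℤ) - ∑ j, ((n j : ℤ) + zd0 (a j)) ≠ -2 := fun hX => by
  have hlt := partitionWeight_lt (fun j => ⟨a j, ha j⟩) hn ha₀ hX
  rw [h.partitionWeight_eq hP] at hlt
  exact lt_irrefl _ hlt

theorem update_of_eq_add_one {n : Fin s → ℕ} (h : StronglyEquidistributed s m P n)
    {j₀ : Fin s} {l : ℕ} (hl : n j₀ = l + 1) :
    StronglyEquidistributed s m P (update n j₀ l) := by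
  intro a ha
  set T : ℤ := m - ∑ j, ((update n j₀ l j : ℤ) + zd0 (a j))
  have hexp : ∀ c, (m : ℤ) - ∑ j, ((n j : ℤ) + zd0 (update a j₀ c j)) =
      T - 1 - zd0 c + zd0 (a j₀) := fun c => by
    have e₁ := sum_update_update n a j₀ (n j₀) c
    have e₂ := sum_update_update n a j₀ l (a j₀)
    rw [update_eq_self] at e₁ e₂
    omega
  have hfine_lt : ∀ c < F (l + 1), ∀ j, update a j₀ c j < F (n j) := fun c hc j => by
    by_cases hj : j = j₀
    · subst hj; simpa [hl] using hc
    · simpa [update_of_ne hj] using ha j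
  have hfine : ∀ c < F (l + 1),
      Nat.card {i // ∀ j, P i j ∈ update (fun j => cell (n j) (a j)) j₀ (cell (l + 1) c) j} =
        F (T - 1 - zd0 c + zd0 (a j₀)) := fun c hc => by
    rw [← hexp, ← hl]
    exact h.card_update_cell (hfine_lt c hc)
  have hα : a j₀ < F l := by simpa using ha j₀
  set b := zshift (a j₀) 1
  have hb : b < F (l + 1) := zshift_F l ▸ zshift_strictMono hα
  have hb0 : zd0 b = 0 := if_neg (zero_notMem_zeckSet_zshift _)
  show Nat.card {i // ∀ j, P i j ∈ (fun j => cell (update n j₀ l j) (a j)) j} = F T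
  rw [← update_eq_self j₀ a, cell_update]
  by_cases h0 : 0 ∈ zeckSet (a j₀)
  · rw [cell_eq_cell_zshift h0, hfine b hb, hb0, zd0, if_pos h0]
    congr 1; push_cast; ring
  have hb1 : b + 1 < F (l + 1) := by
    have := zshift_strictMono.monotone (show a j₀ + 1 ≤ F l from hα)
    rw [zshift_succ_of_zero_notMem h0, zshift_F] at this
    omega
  -- otherwise the cell `b` would have order `m + 2`
  have hT : T ≠ -1 := fun hT =>
    h.exponent_ne_neg_two hP (hfine_lt b hb) (j₀ := j₀) (by omega) (by simpa using hb0)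
      (by rw [hexp b, hb0, zd0, if_neg h0]; push_cast; omega)
  rw [cell_eq_union h0, card_update_union _ _ _ (pairwise_disjoint_cell _ (by omega)),
    hfine b hb, hfine (b + 1) hb1, hb0, zd0, zd0, if_neg h0,
    if_pos (zero_mem_zeckSet_zshift_add_one h0), ← F_sub_one_add_F_sub_two hT]
  congr 2 <;> push_cast <;> ring

theorem anti {mv nv : Fin s → ℕ} (h : StronglyEquidistributed s m P mv) (hnv : nv ≤ mv) :
    StronglyEquidistributed s m P nv := by
  induction mv using WellFoundedLT.induction with
  | _ mv ih =>
    rcases hnv.eq_or_lt with rfl | hlt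
    · exact h
    obtain ⟨j₀, hj₀⟩ := (Pi.lt_def.1 hlt).2
    obtain ⟨l, hl⟩ : ∃ l, mv j₀ = l + 1 := ⟨mv j₀ - 1, by omega⟩
    exact ih _ (update_lt_self_iff.2 (by omega)) (h.update_of_eq_add_one hP hl)
      (le_update_iff.2 ⟨by omega, fun j _ => hnv j⟩)

end StronglyEquidistributed

/-- If a point set of `F^m` points in `[0,1)^s` is strongly
`(m₁,…,m_s)`-equidistributed in base φ, then it is strongly `(n₁,…,n_s)`-equidistributed
for all `0 ≤ n_j ≤ m_j`. -/
theorem statement7 (s m : ℕ) (P : Fin (F m) → Fin s → ℝ)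
    (hP : ∀ i j, P i j ∈ Set.Ico (0 : ℝ) 1)
    (mv : Fin s → ℕ) (hstrong : StronglyEquidistributed s m P mv)
    (nv : Fin s → ℕ) (hnv : ∀ j, nv j ≤ mv j) :
    StronglyEquidistributed s m P nv :=
  hstrong.anti hP hnv
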